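/- arXiv:2004.06661 — 2 statements merged into one kernel-verified Lean document; each statement's English description precedes it below -/
import Mathlib

section
/- Let M ∈ ℝ^{m×n} satisfy the RIP of order k with constant δ ∈ (0,1), let x ∈ ℝⁿ have support L with |L| = k, let A = M_L be the submatrix of columns indexed by L, let w ∈ ℝᵐ, and suppose |⟨m_(j), w⟩| ≤ τ for every j ∈ L. Let x_L ∈ ℝᵏ be the vector of nonzero entries of x, and let x̂ = (AᵀA)⁻¹Aᵀ(A x_L + w) be the least-squares estimate on the true support. Then ‖x_L − x̂‖ ≤ √k · τ / (1 − δ). -/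
open Matrix

noncomputable section

/-- `M` satisfies the RIP of order `s` with constant `δ` if
`(1−δ)‖v‖² ≤ ‖Mv‖² ≤ (1+δ)‖v‖²` for every `v` with at most `s` nonzero entries. -/
def RIP {m n : ℕ} (M : Matrix (Fin m) (Fin n) ℝ) (s : ℕ) (δ : ℝ) : Prop :=
  ∀ v : Fin n → ℝ, (∃ S : Finset (Fin n), S.card ≤ s ∧ ∀ i ∉ S, v i = 0) →
    (1 - δ) * (v ⬝ᵥ v) ≤ (M *ᵥ v) ⬝ᵥ (M *ᵥ v) ∧
      (M *ᵥ v) ⬝ᵥ (M *ᵥ v) ≤ (1 + δ) * (v ⬝ᵥ v)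

/-- `M_L`: the submatrix of `M` of the columns indexed by `L`. -/
def colsOf {m n : ℕ} (M : Matrix (Fin m) (Fin n) ℝ) (L : Finset (Fin n)) :
    Matrix (Fin m) {i // i ∈ L} ℝ :=
  M.submatrix id fun j => (j : Fin n)

/-- The Euclidean norm of a vector. -/
def nrm {ι : Type} [Fintype ι] (v : ι → ℝ) : ℝ := Real.sqrt (v ⬝ᵥ v)

section aux

variable {m n : ℕ} (M : Matrix (Fin m) (Fin n) ℝ) (L : Finset (Fin n))

/-- Extension of a vector on `L` by zero. -/
def extL (z : {i // i ∈ L} → ℝ) : Fin n → ℝ :=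
  fun i => if h : i ∈ L then z ⟨i, h⟩ else 0

lemma subtype_sum_eq (F : Fin n → ℝ) (hF : ∀ i ∉ L, F i = 0) :
    ∑ j : {i // i ∈ L}, F j = ∑ i : Fin n, F i := by
  rw [Finset.sum_coe_sort L F]
  exact Finset.sum_subset (Finset.subset_univ L) (fun i _ hi => hF i hi)

lemma extL_mulVec (z : {i // i ∈ L} → ℝ) :
    colsOf M L *ᵥ z = M *ᵥ extL L z := by
  funext r
  simp only [mulVec, dotProduct, colsOf, submatrix_apply, id]
  rw [← subtype_sum_eq L (fun i => M r i * extL L z i)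
      (fun i hi => by simp [extL, dif_neg hi])]
  exact Finset.sum_congr rfl fun j _ => by simp [extL, dif_pos j.2]

lemma extL_dot (z : {i // i ∈ L} → ℝ) :
    extL L z ⬝ᵥ extL L z = z ⬝ᵥ z := by
  simp only [dotProduct]
  rw [← subtype_sum_eq L (fun i => extL L z i * extL L z i)
      (fun i hi => by simp [extL, dif_neg hi])]
  exact Finset.sum_congr rfl fun j _ => by simp [extL, dif_pos j.2]

end aux

theorem stmt13 {m n k : ℕ} (M : Matrix (Fin m) (Fin n) ℝ) (δ : ℝ)
    (hδ0 : 0 < δ) (hδ1 : δ < 1) (hRIP : RIP M k δ)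
    (x : Fin n → ℝ) (L : Finset (Fin n)) (hsupp : ∀ i, x i ≠ 0 ↔ i ∈ L)
    (hL : L.card = k)
    (w : Fin m → ℝ) (τ : ℝ)
    (hτ : ∀ j ∈ L, |(fun r => M r j) ⬝ᵥ w| ≤ τ)
    (A : Matrix (Fin m) {i // i ∈ L} ℝ) (hA : A = colsOf M L)
    (xL : {i // i ∈ L} → ℝ) (hxL : ∀ i : {i // i ∈ L}, xL i = x i)
    (xhat : {i // i ∈ L} → ℝ)
    (hxhat : xhat = (Aᵀ * A)⁻¹ *ᵥ (Aᵀ *ᵥ (A *ᵥ xL + w))) :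
    nrm (xL - xhat) ≤ Real.sqrt (k : ℝ) * τ / (1 - δ) := by
  have h1δ : (0:ℝ) < 1 - δ := by linarith
  have hlow : ∀ z : {i // i ∈ L} → ℝ, (1 - δ) * (z ⬝ᵥ z) ≤ (A *ᵥ z) ⬝ᵥ (A *ᵥ z) := by
    intro z
    have h := (hRIP (extL L z) ⟨L, hL.le, fun i hi => dif_neg hi⟩).1
    rw [extL_dot] at h
    rw [hA, extL_mulVec]
    exact h
  have hquad : ∀ z : {i // i ∈ L} → ℝ, z ⬝ᵥ ((Aᵀ * A) *ᵥ z) = (A *ᵥ z) ⬝ᵥ (A *ᵥ z) := by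
    intro z
    rw [← mulVec_mulVec, dotProduct_mulVec, vecMul_transpose]
  have hdet : IsUnit (Aᵀ * A).det := by
    rw [isUnit_iff_ne_zero]
    intro h0
    obtain ⟨v, hv0, hv⟩ := (Matrix.exists_mulVec_eq_zero_iff).2 h0
    have h1 := hlow v
    rw [← hquad, hv, dotProduct_zero] at h1
    obtain ⟨i, hi⟩ := Function.ne_iff.mp hv0
    have hle : v i * v i ≤ v ⬝ᵥ v :=
      Finset.single_le_sum (fun j _ => mul_self_nonneg (v j)) (Finset.mem_univ i)
    have hpos : 0 < v ⬝ᵥ v := lt_of_lt_of_le (mul_self_pos.mpr hi) hle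
    nlinarith
  set u : {i // i ∈ L} → ℝ := Aᵀ *ᵥ w with hu
  set z : {i // i ∈ L} → ℝ := (Aᵀ * A)⁻¹ *ᵥ u with hz
  have hxhat' : xhat = xL + z := by
    rw [hxhat, mulVec_add, mulVec_add, mulVec_mulVec, mulVec_mulVec,
      Matrix.mul_assoc, Matrix.nonsing_inv_mul _ hdet, one_mulVec]
  have hdiff : (xL - xhat) ⬝ᵥ (xL - xhat) = z ⬝ᵥ z := by
    have : xL - xhat = -z := by rw [hxhat']; abel
    rw [this, neg_dotProduct, dotProduct_neg, neg_neg]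
  have hBz : (Aᵀ * A) *ᵥ z = u := by
    rw [hz, mulVec_mulVec, Matrix.mul_nonsing_inv _ hdet, one_mulVec]
  -- bound on u
  have hτ0 : 0 ≤ Real.sqrt (k : ℝ) * τ := by
    rcases Finset.eq_empty_or_nonempty L with hLe | ⟨j, hj⟩
    · have : k = 0 := by rw [← hL, hLe]; simp
      simp [this]
    · have : 0 ≤ τ := le_trans (abs_nonneg _) (hτ j hj)
      positivity
  have huk : u ⬝ᵥ u ≤ (k : ℝ) * τ ^ 2 := by
    have hcard : (Finset.univ : Finset {i // i ∈ L}).card = k := by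
      simp [Fintype.card_coe, hL]
    calc u ⬝ᵥ u = ∑ j : {i // i ∈ L}, u j * u j := rfl
      _ ≤ ∑ _j : {i // i ∈ L}, τ ^ 2 := by
          refine Finset.sum_le_sum fun j _ => ?_
          have huj : |u j| ≤ τ := by
            have : u j = (fun r => M r (j : Fin n)) ⬝ᵥ w := by
              simp [hu, hA, mulVec, dotProduct, colsOf, vecMul, transpose_apply,
                submatrix_apply, mul_comm]
            rw [this]
            exact hτ j j.2
          calc u j * u j = |u j| * |u j| := (abs_mul_abs_self _).symm
            _ ≤ τ * τ := mul_le_mul huj huj (abs_nonneg _) (le_trans (abs_nonneg _) huj)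
            _ = τ ^ 2 := (sq τ).symm
      _ = (k : ℝ) * τ ^ 2 := by rw [Finset.sum_const, hcard]; simp [nsmul_eq_mul]
  -- key chain
  have h1 : (1 - δ) * (z ⬝ᵥ z) ≤ z ⬝ᵥ u := by
    have := hlow z
    rw [← hquad, hBz] at this
    exact this
  have hzz : 0 ≤ z ⬝ᵥ z := Finset.sum_nonneg fun j _ => mul_self_nonneg (z j)
  have h2 : (z ⬝ᵥ u) ^ 2 ≤ (z ⬝ᵥ z) * (u ⬝ᵥ u) := by
    have := Finset.sum_mul_sq_le_sq_mul_sq Finset.univ z u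
    simpa [dotProduct, sq] using this
  rw [nrm, hdiff]
  rcases eq_or_lt_of_le hzz with hc0 | hc0
  · rw [← hc0, Real.sqrt_zero]
    positivity
  · have hk : (1 - δ) ^ 2 * (z ⬝ᵥ z) ≤ (k : ℝ) * τ ^ 2 := by
      have hstep : ((1 - δ) * (z ⬝ᵥ z)) ^ 2 ≤ (z ⬝ᵥ z) * ((k : ℝ) * τ ^ 2) := by
        calc ((1 - δ) * (z ⬝ᵥ z)) ^ 2 ≤ (z ⬝ᵥ u) ^ 2 := by
              apply pow_le_pow_left₀ (by positivity) h1
          _ ≤ (z ⬝ᵥ z) * (u ⬝ᵥ u) := h2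
          _ ≤ (z ⬝ᵥ z) * ((k : ℝ) * τ ^ 2) := by
              exact mul_le_mul_of_nonneg_left huk hzz
      nlinarith
    have hfin : z ⬝ᵥ z ≤ (Real.sqrt (k : ℝ) * τ / (1 - δ)) ^ 2 := by
      have hknn : (0:ℝ) ≤ (k:ℝ) := Nat.cast_nonneg k
      have : (Real.sqrt (k : ℝ) * τ / (1 - δ)) ^ 2 = (k : ℝ) * τ ^ 2 / (1 - δ) ^ 2 := by
        rw [div_pow, mul_pow, Real.sq_sqrt hknn]
      rw [this, le_div_iff₀ (by positivity)]
      linarith [hk]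
    calc Real.sqrt (z ⬝ᵥ z) ≤ Real.sqrt ((Real.sqrt (k : ℝ) * τ / (1 - δ)) ^ 2) :=
          Real.sqrt_le_sqrt hfin
      _ = Real.sqrt (k : ℝ) * τ / (1 - δ) := Real.sqrt_sq (by positivity)

end
end

section
/- Let L ∈ ℝ^{d×p} be such that LLᵀ is invertible, let q ∈ ℝᵈ, v ∈ ℝᵖ, and β ∈ ℝ. Set α = qᵀ(LLᵀ)⁻¹q and γ = qᵀ(LLᵀ)⁻¹Lv, let K = [L q] ∈ ℝ^{d×(p+1)} be L with the column q appended, and let u = (v, β) ∈ ℝ^{p+1} be v with β appended. Then KKᵀ = LLᵀ + qqᵀ is invertible, 1 + α > 0, and ‖R_K u‖² − ‖R_L v‖² = (β − γ)² / (1 + α). -/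
/-!
`R_L` is a symmetric idempotent, so `‖R_L x‖² = ‖x‖² − (Lx)ᵀ(LLᵀ)⁻¹(Lx)`. For `K = [L q]` and
`u = (v, β)` we have `Ku = Lv + βq` and `KKᵀ = LLᵀ + qqᵀ`, so by the Sherman–Morrison formula the
quadratic form of `(KKᵀ)⁻¹` is that of `(LLᵀ)⁻¹` corrected by a rank-one term with denominator
`1 + α`; expanding both forms in `Lv` and `q`, everything cancels except `(β − γ)²/(1 + α)`.
Invertibility of `KKᵀ` and `1 + α > 0` come from positive definiteness of `LLᵀ`.
-/

open Matrix

noncomputable section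

/-- The matrix `L` with the vector `q` appended as a last column. -/
def appendCol {d p : ℕ} (L : Matrix (Fin d) (Fin p) ℝ) (q : Fin d → ℝ) :
    Matrix (Fin d) (Fin (p + 1)) ℝ :=
  Matrix.of fun i => Fin.snoc (L i) (q i)

/-- `P_L = Lᵀ (L Lᵀ)⁻¹ L`, the orthogonal projection of `ℝᵖ` onto the row space of `L`. -/
def projRow {d p : ℕ} (L : Matrix (Fin d) (Fin p) ℝ) : Matrix (Fin p) (Fin p) ℝ :=
  Lᵀ * (L * Lᵀ)⁻¹ * L

/-- `R_L = I − P_L`. -/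
def residRow {d p : ℕ} (L : Matrix (Fin d) (Fin p) ℝ) : Matrix (Fin p) (Fin p) ℝ :=
  1 - projRow L

lemma appendCol_mul_transpose {d p : ℕ} (L : Matrix (Fin d) (Fin p) ℝ) (q : Fin d → ℝ) :
    appendCol L q * (appendCol L q)ᵀ = L * Lᵀ + vecMulVec q q := by
  ext i j
  simp [appendCol, mul_apply, vecMulVec_apply, Fin.sum_univ_castSucc]

lemma appendCol_mulVec_snoc {d p : ℕ} (L : Matrix (Fin d) (Fin p) ℝ) (q : Fin d → ℝ)
    (v : Fin p → ℝ) (β : ℝ) : appendCol L q *ᵥ Fin.snoc v β = L *ᵥ v + β • q := by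
  ext i
  simp [appendCol, mulVec, dotProduct, Fin.sum_univ_castSucc, mul_comm]

lemma snoc_dotProduct_snoc {n : ℕ} (x y : Fin n → ℝ) (a b : ℝ) :
    Fin.snoc x a ⬝ᵥ Fin.snoc y b = x ⬝ᵥ y + a * b := by
  simp [dotProduct, Fin.sum_univ_castSucc]

lemma dotProduct_mulVec_comm_of_transpose_eq {n : Type*} [Fintype n] {M : Matrix n n ℝ}
    (hM : Mᵀ = M) (x y : n → ℝ) : x ⬝ᵥ (M *ᵥ y) = y ⬝ᵥ (M *ᵥ x) := by
  rw [dotProduct_mulVec, ← mulVec_transpose, hM, dotProduct_comm]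

lemma transpose_inv_mul_transpose_self {m n : Type*} [Fintype m] [Fintype n] [DecidableEq m]
    (L : Matrix m n ℝ) : ((L * Lᵀ)⁻¹)ᵀ = (L * Lᵀ)⁻¹ := by
  rw [transpose_nonsing_inv, transpose_mul, transpose_transpose]

lemma posDef_mul_transpose_self_of_isUnit {m n : Type*} [Fintype m] [Fintype n] [DecidableEq m]
    {L : Matrix m n ℝ} (hL : IsUnit (L * Lᵀ)) : (L * Lᵀ).PosDef := by
  have h := posSemidef_self_mul_conjTranspose L
  rw [conjTranspose_eq_transpose_of_trivial] at h
  exact h.posDef_iff_isUnit.mpr hL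

section ShermanMorrison

variable {n : Type*} [Fintype n] [DecidableEq n] {A : Matrix n n ℝ} {q r : n → ℝ}

lemma inv_add_vecMulVec_mulVec (hA : IsUnit A) (hB : IsUnit (A + vecMulVec q r))
    (h : 1 + r ⬝ᵥ (A⁻¹ *ᵥ q) ≠ 0) (w : n → ℝ) :
    (A + vecMulVec q r)⁻¹ *ᵥ w =
      A⁻¹ *ᵥ w - ((r ⬝ᵥ (A⁻¹ *ᵥ w)) / (1 + r ⬝ᵥ (A⁻¹ *ᵥ q))) • (A⁻¹ *ᵥ q) := by
  have hAA : ∀ x, A *ᵥ (A⁻¹ *ᵥ x) = x := fun x => by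
    rw [mulVec_mulVec, mul_nonsing_inv _ ((isUnit_iff_isUnit_det A).mp hA), one_mulVec]
  set y := A⁻¹ *ᵥ w - ((r ⬝ᵥ (A⁻¹ *ᵥ w)) / (1 + r ⬝ᵥ (A⁻¹ *ᵥ q))) • (A⁻¹ *ᵥ q)
  have hy : (A + vecMulVec q r) *ᵥ y = w := by
    have hc : r ⬝ᵥ y = (r ⬝ᵥ (A⁻¹ *ᵥ w)) / (1 + r ⬝ᵥ (A⁻¹ *ᵥ q)) := by
      simp only [y, dotProduct_sub, dotProduct_smul, smul_eq_mul]
      field_simp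
      ring
    rw [add_mulVec, vecMulVec_mulVec, op_smul_eq_smul, hc]
    simp only [y, mulVec_sub, mulVec_smul, hAA]
    abel
  rw [← hy, mulVec_mulVec, nonsing_inv_mul _ ((isUnit_iff_isUnit_det _).mp hB), one_mulVec]

lemma dotProduct_inv_add_vecMulVec_mulVec (hA : IsUnit A) (hB : IsUnit (A + vecMulVec q r))
    (h : 1 + r ⬝ᵥ (A⁻¹ *ᵥ q) ≠ 0) (w : n → ℝ) :
    w ⬝ᵥ ((A + vecMulVec q r)⁻¹ *ᵥ w) =
      w ⬝ᵥ (A⁻¹ *ᵥ w) -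
        (w ⬝ᵥ (A⁻¹ *ᵥ q)) * (r ⬝ᵥ (A⁻¹ *ᵥ w)) / (1 + r ⬝ᵥ (A⁻¹ *ᵥ q)) := by
  rw [inv_add_vecMulVec_mulVec hA hB h, dotProduct_sub, dotProduct_smul, smul_eq_mul]
  ring

end ShermanMorrison

section ResidRow

variable {d p : ℕ} (L : Matrix (Fin d) (Fin p) ℝ)

lemma residRow_transpose : (residRow L)ᵀ = residRow L := by
  simp only [residRow, projRow, transpose_sub, transpose_one, transpose_mul, transpose_transpose,
    transpose_inv_mul_transpose_self, Matrix.mul_assoc]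

lemma projRow_mul_projRow (hL : IsUnit (L * Lᵀ)) : projRow L * projRow L = projRow L := by
  simp only [projRow, Matrix.mul_assoc]
  rw [← Matrix.mul_assoc L Lᵀ, ← Matrix.mul_assoc (L * Lᵀ),
    mul_nonsing_inv _ ((isUnit_iff_isUnit_det _).mp hL), Matrix.one_mul]

lemma residRow_mul_residRow (hL : IsUnit (L * Lᵀ)) : residRow L * residRow L = residRow L := by
  simp only [residRow, Matrix.sub_mul, Matrix.mul_sub, Matrix.one_mul, Matrix.mul_one,
    projRow_mul_projRow L hL]
  abel

lemma dotProduct_residRow_mulVec_self (hL : IsUnit (L * Lᵀ)) (x : Fin p → ℝ) :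
    (residRow L *ᵥ x) ⬝ᵥ (residRow L *ᵥ x) = x ⬝ᵥ x - (L *ᵥ x) ⬝ᵥ ((L * Lᵀ)⁻¹ *ᵥ (L *ᵥ x)) := by
  rw [dotProduct_mulVec, ← mulVec_transpose, residRow_transpose, mulVec_mulVec,
    residRow_mul_residRow L hL]
  simp only [residRow, projRow, sub_mulVec, one_mulVec, sub_dotProduct, ← mulVec_mulVec]
  rw [mulVec_transpose, ← dotProduct_mulVec, dotProduct_comm _ (L *ᵥ x)]

end ResidRow

theorem stmt18 {d p : ℕ} (L : Matrix (Fin d) (Fin p) ℝ)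
    (hL : IsUnit (L * Lᵀ))
    (q : Fin d → ℝ) (v : Fin p → ℝ) (β : ℝ)
    (α γ : ℝ) (hα : α = q ⬝ᵥ ((L * Lᵀ)⁻¹ *ᵥ q))
    (hγ : γ = q ⬝ᵥ ((L * Lᵀ)⁻¹ *ᵥ (L *ᵥ v)))
    (K : Matrix (Fin d) (Fin (p + 1)) ℝ) (hK : K = appendCol L q)
    (u : Fin (p + 1) → ℝ) (hu : u = Fin.snoc v β) :
    K * Kᵀ = L * Lᵀ + vecMulVec q q ∧
      IsUnit (K * Kᵀ) ∧
      0 < 1 + α ∧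
      (residRow K *ᵥ u) ⬝ᵥ (residRow K *ᵥ u) -
          (residRow L *ᵥ v) ⬝ᵥ (residRow L *ᵥ v) =
        (β - γ) ^ 2 / (1 + α) := by
  subst hK hu
  have hKK := appendCol_mul_transpose L q
  have hA := posDef_mul_transpose_self_of_isUnit hL
  have hα_nonneg : 0 ≤ α := by
    simpa [hα] using hA.inv.posSemidef.dotProduct_mulVec_nonneg q
  have hB : IsUnit (L * Lᵀ + vecMulVec q q) :=
    (hA.add_posSemidef (by simpa using posSemidef_vecMulVec_self_star q)).isUnit
  have hα_pos : 0 < 1 + α := by linarith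
  refine ⟨hKK, hKK ▸ hB, hα_pos, ?_⟩
  have hsymm := dotProduct_mulVec_comm_of_transpose_eq (transpose_inv_mul_transpose_self L)
  rw [dotProduct_residRow_mulVec_self _ (hKK ▸ hB), dotProduct_residRow_mulVec_self _ hL, hKK,
    appendCol_mulVec_snoc, snoc_dotProduct_snoc,
    dotProduct_inv_add_vecMulVec_mulVec hL hB (by rw [← hα]; exact hα_pos.ne')]
  simp only [← hα, mulVec_add, mulVec_smul, dotProduct_add, add_dotProduct, dotProduct_smul,
    smul_dotProduct, smul_eq_mul, hsymm (L *ᵥ v) q, ← hγ]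
  field_simp
  ring

end
end
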